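/- arXiv:2007.06437 — 6 statements merged into one kernel-verified Lean document; each statement's English description precedes it below -/
import Mathlib

section
/- For any real x ≥ 2 and any positive reals a₁, a₂, a₃, a₄ such that a₃·x ≤ a₁·√x·log(a₂·x) + a₄·log(a₂·x), it holds that x ≤ (4a₄/a₃)·log(2a₄a₂/a₃) + (128a₁²/(9a₃²))·(log(4a₁√a₂·e/a₃))². -/
/-!
The tangent-line bound `log v ≤ log w + v / (e w)`, applied at `v = √(a₂ x)` in the term
`a₁ √x log (a₂ x)` and at `v = a₂ x` in the term `a₄ log (a₂ x)`, with the points `w` read off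
the two logarithms of the conclusion, turns the hypothesis into a quadratic inequality
`(1 - 1/(2e) - 1/(2e²)) y² ≤ 2 P y + Q` in `y = √x`, where `P = a₁ M / a₃`, `Q = a₄ Λ₀ / a₃`
and `M`, `Λ₀` are those two logarithms. AM-GM inverts it. When `Λ₀ < 0`, positivity of
`log (a₂ x)` (forced by the hypothesis) bounds `-Q` by `x / (2e)`, which the slack in the
constant `128/9` absorbs.
-/

open Real

theorem Real.log_le_log_add_div_mul_exp_one {v w : ℝ} (hv : 0 < v) (hw : 0 < w) :
    log v ≤ log w + v / (w * exp 1) := by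
  have h := exp_one_mul_le_exp (x := log (v / w))
  rw [exp_log (div_pos hv hw), log_div hv.ne' hw.ne'] at h
  have : log v - log w ≤ v / w / exp 1 := by rw [le_div_iff₀ (exp_pos 1)]; linarith
  rw [div_mul_eq_div_div]
  linarith

theorem Real.one_div_two_mul_exp_one_le : 1 / (2 * exp 1) ≤ 1 / 5 := by
  rw [div_le_div_iff₀ (by positivity) (by norm_num)]
  linarith [exp_one_gt_d9]

theorem Real.one_div_two_mul_exp_one_sq_add_le :
    1 / (2 * exp 1 ^ 2) + 1 / (2 * exp 1) ≤ 13 / 50 := by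
  have he : 2.7 < exp 1 := lt_trans (by norm_num) exp_one_gt_d9
  rw [div_add_div _ _ (by positivity) (by positivity), div_le_div_iff₀ (by positivity) (by norm_num)]
  nlinarith

theorem sq_le_of_mul_sq_le_mul_add {α b d y : ℝ} (hα : 0 < α) (h : α * y ^ 2 ≤ b * y + d) :
    y ^ 2 ≤ (b / α) ^ 2 + 2 * d / α := by
  have key : α * (α * y ^ 2) ≤ α * (α * ((b / α) ^ 2 + 2 * d / α)) := by
    field_simp
    nlinarith [sq_nonneg (α * y - b)]
  exact le_of_mul_le_mul_left (le_of_mul_le_mul_left key hα) hα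

-- `37/50 ≤ 1 - 1/(2e) - 1/(2e²)` and `1/5 ≥ 1/(2e)` are the two constants the tangent bounds produce.
theorem sq_le_of_self_bounding {y P Q : ℝ} (hQ : -(y ^ 2 / 5) ≤ Q)
    (h : 37 / 50 * y ^ 2 ≤ 2 * P * y + Q) : y ^ 2 ≤ 4 * Q + 128 / 9 * P ^ 2 := by
  have h' := sq_le_of_mul_sq_le_mul_add (by norm_num) h
  ring_nf at h'
  linarith [sq_nonneg P]

/-- Inversion of a Bernstein-type self-bounding inequality. -/
theorem log_sqrt_inversion
    (x a₁ a₂ a₃ a₄ : ℝ) (hx : 2 ≤ x)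
    (h₁ : 0 < a₁) (h₂ : 0 < a₂) (h₃ : 0 < a₃) (h₄ : 0 < a₄)
    (h : a₃ * x ≤ a₁ * Real.sqrt x * Real.log (a₂ * x) + a₄ * Real.log (a₂ * x)) :
    x ≤ 4 * a₄ / a₃ * Real.log (2 * a₄ * a₂ / a₃)
      + 128 * a₁ ^ 2 / (9 * a₃ ^ 2)
        * (Real.log (4 * a₁ * Real.sqrt a₂ * Real.exp 1 / a₃)) ^ 2 := by
  set y := √x
  set L := log (a₂ * x)
  set M := log (4 * a₁ * √a₂ * exp 1 / a₃)
  set Λ₀ := log (2 * a₄ * a₂ / a₃)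
  have hx₀ : 0 < x := by linarith
  have hy₀ : 0 < y := sqrt_pos.2 hx₀
  have hyx : y ^ 2 = x := sq_sqrt hx₀.le
  have hax : 0 ≤ a₃ * x := by positivity
  have hL : 0 < L := by
    by_contra! hL
    nlinarith [mul_nonpos_of_nonneg_of_nonpos (by positivity : 0 ≤ a₁ * y + a₄) hL]
  have hLM : a₁ * y * L ≤ 2 * a₁ * M * y + a₃ * x * (1 / (2 * exp 1 ^ 2)) := by
    have htan := log_le_log_add_div_mul_exp_one (v := √a₂ * y)
      (w := 4 * a₁ * √a₂ * exp 1 / a₃) (by positivity) (by positivity)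
    calc a₁ * y * L = 2 * (a₁ * y) * log (√a₂ * y) := by
          rw [← sqrt_mul h₂.le, log_sqrt (by positivity)]; ring
      _ ≤ 2 * (a₁ * y) * (M + √a₂ * y / (4 * a₁ * √a₂ * exp 1 / a₃ * exp 1)) := by gcongr
      _ = _ := by rw [← hyx]; field_simp; ring
  have hLΛ₀ : a₄ * L ≤ a₄ * Λ₀ + a₃ * x * (1 / (2 * exp 1)) := by
    have htan := log_le_log_add_div_mul_exp_one (v := a₂ * x)
      (w := 2 * a₄ * a₂ / a₃) (by positivity) (by positivity)
    calc a₄ * L ≤ a₄ * (Λ₀ + a₂ * x / (2 * a₄ * a₂ / a₃ * exp 1)) := by gcongr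
      _ = _ := by field_simp
  have hlow : -(y ^ 2 / 5) ≤ a₄ * Λ₀ / a₃ := by
    rw [le_div_iff₀ h₃, hyx]
    linarith [mul_le_mul_of_nonneg_left one_div_two_mul_exp_one_le hax, mul_pos h₄ hL]
  have hself : 37 / 50 * y ^ 2 ≤ 2 * (a₁ * M / a₃) * y + a₄ * Λ₀ / a₃ := by
    rw [show 2 * (a₁ * M / a₃) * y + a₄ * Λ₀ / a₃ = (2 * a₁ * M * y + a₄ * Λ₀) / a₃ by ring,
      le_div_iff₀ h₃, hyx]
    linarith [mul_le_mul_of_nonneg_left one_div_two_mul_exp_one_sq_add_le hax]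
  calc x = y ^ 2 := hyx.symm
    _ ≤ 4 * (a₄ * Λ₀ / a₃) + 128 / 9 * (a₁ * M / a₃) ^ 2 := sq_le_of_self_bounding hlow hself
    _ = _ := by ring
end

section
/- Let b₁, b₂, b₃ be positive real constants such that log(b₁b₂) ≥ 1. Then any real x > 0 satisfying x ≤ b₁·log(b₂·x) + b₃ also satisfies x ≤ 2b₁·log(2b₁b₂) + 2b₃. -/
/-- Inversion of a self-bounding logarithmic inequality with an additive constant. -/
theorem log_inversion_with_constant
    (b₁ b₂ b₃ x : ℝ) (hb₁ : 0 < b₁) (hb₂ : 0 < b₂) (hb₃ : 0 < b₃)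
    (hlog : 1 ≤ Real.log (b₁ * b₂)) (hx : 0 < x)
    (h : x ≤ b₁ * Real.log (b₂ * x) + b₃) :
    x ≤ 2 * b₁ * Real.log (2 * b₁ * b₂) + 2 * b₃ := by
  have h2b₁ : (0:ℝ) < 2 * b₁ := by linarith
  have hsplit : Real.log (b₂ * x) = Real.log (2 * b₁ * b₂) + Real.log (x / (2 * b₁)) := by
    rw [← Real.log_mul (by positivity) (by positivity)]
    congr 1
    field_simp
  have hle : Real.log (x / (2 * b₁)) ≤ x / (2 * b₁) - 1 :=
    Real.log_le_sub_one_of_pos (by positivity)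
  have hb : x ≤ b₁ * Real.log (2 * b₁ * b₂) + b₁ * (x / (2 * b₁) - 1) + b₃ := by
    rw [hsplit] at h; nlinarith
  have : b₁ * (x / (2 * b₁)) = x / 2 := by field_simp
  nlinarith
end

section
/- For any real x ≥ 2 and any positive reals a₁, a₂, a₃, it holds that -a₃·x + a₁·√x·log(a₂·x) ≤ (16a₁²/(9a₃))·(log(2a₁√a₂·e/a₃))². -/
/-- Uniform bound over `x ≥ 2` of a concave-in-`√x` expression. -/
theorem neg_linear_plus_sqrt_log_bound
    (x a₁ a₂ a₃ : ℝ) (hx : 2 ≤ x)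
    (h₁ : 0 < a₁) (h₂ : 0 < a₂) (h₃ : 0 < a₃) :
    -a₃ * x + a₁ * Real.sqrt x * Real.log (a₂ * x)
      ≤ 16 * a₁ ^ 2 / (9 * a₃)
        * (Real.log (2 * a₁ * Real.sqrt a₂ * Real.exp 1 / a₃)) ^ 2 := by
  have hx0 : (0:ℝ) < x := by linarith
  set t := Real.sqrt x with ht
  have ht0 : 0 < t := Real.sqrt_pos.mpr hx0
  have ht2 : t ^ 2 = x := Real.sq_sqrt hx0.le
  set b := Real.sqrt a₂ with hb
  have hb0 : 0 < b := Real.sqrt_pos.mpr h₂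
  have hb2 : b ^ 2 = a₂ := Real.sq_sqrt h₂.le
  set E := Real.exp 2 with hEdef
  have hE0 : 0 < E := Real.exp_pos 2
  have hE7 : 7 < E := by
    have h9 : (2.7182818283 : ℝ) < Real.exp 1 := Real.exp_one_gt_d9
    have : Real.exp 2 = Real.exp 1 * Real.exp 1 := by
      rw [← Real.exp_add]; norm_num
    nlinarith
  set L := Real.log (2 * a₁ * b * Real.exp 1 / a₃) with hL
  set c := 2 * a₁ * b * E / a₃ with hc
  have hc0 : 0 < c := by positivity
  have hlogx : Real.log (a₂ * x) = 2 * Real.log (b * t) := by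
    rw [← hb2, ← ht2, show b ^ 2 * t ^ 2 = (b * t) ^ 2 by ring, Real.log_pow]
    push_cast; ring
  have hlogc : Real.log c = L + 1 := by
    rw [hc, hL, hEdef, Real.log_div (by positivity) h₃.ne',
      Real.log_div (by positivity) h₃.ne',
      Real.log_mul (by positivity) (Real.exp_pos 2).ne',
      Real.log_mul (by positivity) (Real.exp_pos 1).ne',
      Real.log_exp, Real.log_exp]
    ring
  have key : Real.log (b * t) ≤ b * t / c + L := by
    have h := Real.log_le_sub_one_of_pos (show 0 < b * t / c by positivity)
    rw [Real.log_div (by positivity) hc0.ne'] at h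
    linarith
  have hfrac : a₁ * t * (2 * (b * t / c + L)) = a₃ * t ^ 2 / E + 2 * a₁ * L * t := by
    rw [hc]; field_simp
  have step1 : a₁ * t * Real.log (a₂ * x) ≤ a₃ * t ^ 2 / E + 2 * a₁ * L * t := by
    rw [hlogx, ← hfrac]
    have hat : 0 < a₁ * t := by positivity
    nlinarith [key]
  have main : -a₃ * t ^ 2 + (a₃ * t ^ 2 / E + 2 * a₁ * L * t)
      ≤ 16 * a₁ ^ 2 / (9 * a₃) * L ^ 2 := by
    rw [← sub_nonneg]
    have expand : 16 * a₁ ^ 2 / (9 * a₃) * L ^ 2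
        - (-a₃ * t ^ 2 + (a₃ * t ^ 2 / E + 2 * a₁ * L * t))
        = (16 * a₁ ^ 2 * E * L ^ 2 + 9 * a₃ ^ 2 * (E - 1) * t ^ 2
            - 18 * a₁ * a₃ * E * L * t) / (9 * a₃ * E) := by
      field_simp; ring
    rw [expand]
    apply div_nonneg _ (by positivity)
    have hE1 : (0:ℝ) < E - 1 := by linarith
    nlinarith [sq_nonneg (3 * a₃ * (E - 1) * t - 3 * a₁ * E * L),
      mul_nonneg (mul_nonneg hE0.le (by linarith : (0:ℝ) ≤ 7 * E - 16)) (sq_nonneg (a₁ * L)),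
      mul_pos h₃ hE1, sq_nonneg (a₁ * L), mul_pos h₃ h₃]
  calc -a₃ * x + a₁ * t * Real.log (a₂ * x)
      = -a₃ * t ^ 2 + a₁ * t * Real.log (a₂ * x) := by rw [ht2]
    _ ≤ -a₃ * t ^ 2 + (a₃ * t ^ 2 / E + 2 * a₁ * L * t) := by linarith [step1]
    _ ≤ 16 * a₁ ^ 2 / (9 * a₃) * L ^ 2 := main
end

section
/- Let b₁ and b₂ be positive real constants such that log(b₁b₂) ≥ 1. Then any real x > 0 satisfying x ≤ b₁·log(b₂·x) also satisfies x ≤ 2b₁·log(b₁b₂). -/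
/-- Inversion of a self-bounding logarithmic inequality. -/
theorem log_inversion
    (b₁ b₂ x : ℝ) (hb₁ : 0 < b₁) (hb₂ : 0 < b₂)
    (hlog : 1 ≤ Real.log (b₁ * b₂)) (hx : 0 < x)
    (h : x ≤ b₁ * Real.log (b₂ * x)) :
    x ≤ 2 * b₁ * Real.log (b₁ * b₂) := by
  have he : (2:ℝ) ≤ Real.exp 1 := by
    have := Real.add_one_le_exp (1:ℝ); linarith
  have hepos : (0:ℝ) < Real.exp 1 := Real.exp_pos 1
  -- log(x/b₁) ≤ x/(e*b₁)
  have h1 : Real.log (x / (b₁ * Real.exp 1)) ≤ x / (b₁ * Real.exp 1) - 1 :=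
    Real.log_le_sub_one_of_pos (by positivity)
  have h2 : Real.log (x / (b₁ * Real.exp 1)) = Real.log (x / b₁) - 1 := by
    rw [div_mul_eq_div_div, Real.log_div (by positivity) (by positivity), Real.log_exp]
  have hkey : Real.log (x / b₁) ≤ x / (b₁ * Real.exp 1) := by linarith [h1, h2.symm.le]
  have hsplit : Real.log (b₂ * x) = Real.log (b₁ * b₂) + Real.log (x / b₁) := by
    rw [← Real.log_mul (by positivity) (by positivity)]
    congr 1
    field_simp
  have hx2 : x / (b₁ * Real.exp 1) ≤ x / (b₁ * 2) := by
    apply div_le_div_of_nonneg_left hx.le (by positivity)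
    nlinarith
  have : x ≤ b₁ * Real.log (b₁ * b₂) + b₁ * (x / (b₁ * 2)) := by
    calc x ≤ b₁ * Real.log (b₂ * x) := h
    _ = b₁ * Real.log (b₁ * b₂) + b₁ * Real.log (x / b₁) := by rw [hsplit]; ring
    _ ≤ b₁ * Real.log (b₁ * b₂) + b₁ * (x / (b₁ * 2)) := by
        nlinarith [hkey.trans hx2]
  have hbx : b₁ * (x / (b₁ * 2)) = x / 2 := by field_simp
  rw [hbx] at this
  linarith
end

section
/- Fix integers S ≥ 1 and A ≥ 1 and reals η > 0, δ ∈ (0,1), and X > 0 satisfying 8eX√(2SA) > √δ·η. Let b := ⌈ (57X²/η²)·(log(8eX√(2SA)/(√δ·η)))² + (24/η)·log(24SA/(δη)) ⌉. Then every integer N ≥ max(b, 2) satisfies 2X·√(log(2SAN/δ)/N) + (6/N)·log(2SAN/δ) ≤ η. -/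
set_option maxHeartbeats 1000000
open Real

lemma log_le_div_exp_one {x : ℝ} (hx : 0 < x) : Real.log x ≤ x / Real.exp 1 := by
  have h := Real.log_le_sub_one_of_pos (div_pos hx (Real.exp_pos 1))
  rw [Real.log_div hx.ne' (Real.exp_pos 1).ne', Real.log_exp] at h
  linarith

lemma inv_log {a α x : ℝ} (ha : 0 < a) (hα : 0 < α) (hL : 1 ≤ Real.log (a/α))
    (hx : 2/α * Real.log (a/α) ≤ x) : Real.log (a*x) ≤ α * x := by
  set L := Real.log (a/α) with hLdef
  have hL0 : 0 < L := lt_of_lt_of_le one_pos hL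
  set x₀ : ℝ := 2*L/α with hx0def
  have hx₀ : 0 < x₀ := by positivity
  have hxx : x₀ ≤ x := by
    have h : 2*L/α = 2/α*L := by ring
    rw [hx0def, h]; exact hx
  have hxpos : 0 < x := lt_of_lt_of_le hx₀ hxx
  have hax0 : a * x₀ = (a/α) * (2*L) := by
    rw [hx0def]; field_simp
  have h2L : Real.log (2*L) ≤ L := by
    rw [Real.log_mul two_ne_zero hL0.ne']
    have h1 : Real.log L ≤ L - 1 := Real.log_le_sub_one_of_pos hL0
    have h2 : Real.log 2 ≤ 1 := by
      have := Real.log_two_lt_d9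
      linarith
    linarith
  have haα : 0 < a/α := div_pos ha hα
  have hαx0 : α * x₀ = 2*L := by rw [hx0def]; field_simp
  have hlog_ax0 : Real.log (a * x₀) ≤ α * x₀ := by
    rw [hax0, Real.log_mul haα.ne' (by positivity), hαx0]
    linarith
  have hsplit : Real.log (a*x) = Real.log (a*x₀) + Real.log (x/x₀) := by
    rw [← Real.log_mul (by positivity) (by positivity)]
    congr 1
    field_simp
  have hq : Real.log (x/x₀) ≤ x/x₀ - 1 := Real.log_le_sub_one_of_pos (by positivity)
  have hαx0' : 1 ≤ α * x₀ := by rw [hαx0]; linarith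
  have hfrac : x/x₀ - 1 ≤ α*(x - x₀) := by
    rw [div_sub_one hx₀.ne', div_le_iff₀ hx₀]
    nlinarith
  calc Real.log (a*x) = Real.log (a*x₀) + Real.log (x/x₀) := hsplit
    _ ≤ α*x₀ + (x/x₀ - 1) := by linarith
    _ ≤ α*x₀ + α*(x - x₀) := by linarith
    _ = α*x := by ring

lemma modest_aux_quad1 (u l : ℝ) (hl : 0 ≤ l) : 32*(2*u - (l + 2)) ≤ 57*u^2 := by
  nlinarith [sq_nonneg (57*u - 32)]

lemma modest_aux_quad2 (u l : ℝ) (hl : 0 ≤ l) : 32*(2*u - (l + 2)) + 12 ≤ 57*u^2 := by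
  nlinarith [sq_nonneg (57*u - 32)]

lemma modest_aux_cube (e' M2 C : ℝ) (he : 0 < e') (hC : 0 < C) (h : 4*e'^3 < M2) :
    e' * (64*e'^2*C) ≤ M2*(16*C) := by nlinarith

/-- Correctness of the ModEst sampling requirement: once
`b = ⌈57X²/η² log²(8eX√(2SA)/(√δ η)) + 24/η log(24SA/(δη))⌉` samples are available,
the empirical Bernstein confidence width falls below the accuracy `η`. -/
theorem modest_sampling_requirement
    (S A : ℕ) (hS : 1 ≤ S) (hA : 1 ≤ A)
    (η δ X : ℝ) (hη : 0 < η) (hδ0 : 0 < δ) (hδ1 : δ < 1) (hX : 0 < X)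
    (hcond : Real.sqrt δ * η < 8 * Real.exp 1 * X * Real.sqrt (2 * S * A))
    (N : ℕ)
    (hNb : (⌈57 * X ^ 2 / η ^ 2
        * (Real.log (8 * Real.exp 1 * X * Real.sqrt (2 * S * A) / (Real.sqrt δ * η))) ^ 2
        + 24 / η * Real.log (24 * S * A / (δ * η))⌉ : ℤ) ≤ (N : ℤ))
    (hN2 : 2 ≤ N) :
    2 * X * Real.sqrt (Real.log (2 * S * A * N / δ) / N)
      + 6 / (N : ℝ) * Real.log (2 * S * A * N / δ) ≤ η := by
  have hS1 : (1:ℝ) ≤ (S:ℝ) := by exact_mod_cast hS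
  have hA1 : (1:ℝ) ≤ (A:ℝ) := by exact_mod_cast hA
  have hN2' : (2:ℝ) ≤ (N:ℝ) := by exact_mod_cast hN2
  have hNpos : (0:ℝ) < (N:ℝ):= by linarith
  have hP : (0:ℝ) < 2*(S:ℝ)*(A:ℝ) := by nlinarith
  have hP2 : (2:ℝ) ≤ 2*(S:ℝ)*(A:ℝ) := by nlinarith
  have hsδ : 0 < Real.sqrt δ := Real.sqrt_pos.mpr hδ0
  set M := 8 * Real.exp 1 * X * Real.sqrt (2 * (S:ℝ) * (A:ℝ)) / (Real.sqrt δ * η) with hMdef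
  have hM1 : 1 < M := (one_lt_div (by positivity)).mpr hcond
  have hMpos : 0 < M := lt_trans one_pos hM1
  set u := Real.log M with hudef
  have hu0 : 0 < u := Real.log_pos hM1
  have hepos := Real.exp_pos 1
  have hM2 : M^2 = 64 * Real.exp 1^2 * X^2 * (2*(S:ℝ)*(A:ℝ)) / (δ * η^2) := by
    rw [hMdef, div_pow, mul_pow (Real.sqrt δ) η, Real.sq_sqrt hδ0.le,
      mul_pow (8 * Real.exp 1 * X) (Real.sqrt (2*(S:ℝ)*(A:ℝ))), Real.sq_sqrt hP.le]
    ring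
  set C := 2*(S:ℝ)*(A:ℝ)/δ with hCdef
  have hC2 : 2 < C := by
    rw [hCdef, lt_div_iff₀ hδ0]; nlinarith
  have hCpos : 0 < C := by linarith
  have harg : 2*(S:ℝ)*(A:ℝ)*(N:ℝ)/δ = C * (N:ℝ) := by rw [hCdef]; ring
  rw [harg]
  set t := Real.log (C * (N:ℝ)) with htdef
  have ht0 : 0 < t := Real.log_pos (by nlinarith)
  have hXrel : X^2/η^2 = M^2/(64*Real.exp 1^2 * C) := by
    rw [hM2, hCdef]; field_simp
  set term2 := 24 / η * Real.log (24 * (S:ℝ) * (A:ℝ) / (δ * η)) with hterm2def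
  have hbN : 57 * X ^ 2 / η ^ 2 * u ^ 2 + term2 ≤ (N:ℝ) := by
    have h1 := Int.le_ceil (57 * X ^ 2 / η ^ 2 * u ^ 2 + term2)
    have h2 : ((⌈57 * X ^ 2 / η ^ 2 * u ^ 2 + term2⌉ : ℤ) : ℝ) ≤ (N:ℝ) := by
      exact_mod_cast hNb
    linarith
  have hterm1 : 0 ≤ 57 * X^2/η^2 * u^2 := by positivity
  have hargpos : (0:ℝ) < 24 * (S:ℝ) * (A:ℝ) / (δ * η) := by positivity
  -- Step (i): second term
  have hstepA : t ≤ η/12 * (N:ℝ) := by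
    by_cases hcase : 1 ≤ Real.log (24 * (S:ℝ) * (A:ℝ) / (δ * η))
    · have hCa : C / (η/12) = 24 * (S:ℝ)*(A:ℝ)/(δ*η) := by
        rw [hCdef]; field_simp; ring
      have h24 : 2/(η/12) = 24/η := by
        field_simp; ring
      have hx : 2/(η/12) * Real.log (C/(η/12)) ≤ (N:ℝ) := by
        rw [hCa, h24]; rw [hterm2def] at hbN; linarith
      exact inv_log hCpos (by positivity) (by rw [hCa]; exact hcase) hx
    · push_neg at hcase
      have harge : 24*(S:ℝ)*(A:ℝ)/(δ*η) < Real.exp 1 := by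
        by_contra h
        push_neg at h
        exact absurd ((Real.le_log_iff_exp_le hargpos).mpr h) (not_le.mpr hcase)
      have hCe : C < η/12 * Real.exp 1 := by
        have hCsplit : C = 24*(S:ℝ)*(A:ℝ)/(δ*η) * (η/12) := by
          rw [hCdef]; field_simp; ring
        rw [hCsplit]
        nlinarith
      have hle := log_le_div_exp_one (show 0 < C*(N:ℝ) by positivity)
      calc t ≤ C*(N:ℝ)/Real.exp 1 := hle
        _ ≤ η/12*(N:ℝ) := by rw [div_le_iff₀ hepos]; nlinarith
  -- Step (ii): first term, key bound M² t ≤ 4e² C N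
  have hstepB : M^2 * t ≤ 4*Real.exp 1^2 * (C*(N:ℝ)) := by
    by_cases hMc : M^2 ≤ 4*Real.exp 1^3
    · have hle := log_le_div_exp_one (show 0 < C*(N:ℝ) by positivity)
      have h1 : M^2 * t ≤ (4*Real.exp 1^3) * (C*(N:ℝ)/Real.exp 1) :=
        mul_le_mul hMc hle ht0.le (by positivity)
      have hc : C*(N:ℝ)/Real.exp 1 * Real.exp 1 = C*(N:ℝ) := div_mul_cancel₀ _ hepos.ne'
      have h2 : (4*Real.exp 1^3) * (C*(N:ℝ)/Real.exp 1) = 4*Real.exp 1^2*(C*(N:ℝ)) := by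
        calc (4*Real.exp 1^3) * (C*(N:ℝ)/Real.exp 1)
            = 4*Real.exp 1^2*(C*(N:ℝ)/Real.exp 1 * Real.exp 1) := by ring
          _ = 4*Real.exp 1^2*(C*(N:ℝ)) := by rw [hc]
      linarith [h1, h2.le]
    · push_neg at hMc
      set y := 4*Real.exp 1^2/M^2 with hydef
      have hy0 : 0 < y := by positivity
      have h1y : (1:ℝ)/y = M^2/(4*Real.exp 1^2) := by
        rw [hydef]; field_simp
      have hM2e : Real.exp 1 ≤ M^2/(4*Real.exp 1^2) := by
        rw [le_div_iff₀ (by positivity)]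
        have hre : Real.exp 1 * (4*Real.exp 1^2) = 4*Real.exp 1^3 := by ring
        linarith
      have hLy : 1 ≤ Real.log (1/y) := by
        rw [h1y]
        exact (Real.le_log_iff_exp_le (by positivity)).mpr hM2e
      have hlog1y : Real.log (1/y) = 2*u - (Real.log 4 + 2) := by
        rw [h1y, Real.log_div (by positivity) (by positivity), Real.log_mul (by norm_num) (by positivity),
          Real.log_pow, Real.log_pow, Real.log_exp, hudef]
        push_cast
        ring
      have h2y : 2/y = M^2/(2*Real.exp 1^2) := by
        rw [hydef]; field_simp; ring
      -- the key sample-size inequality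
      have hxge : 2/y * Real.log (1/y) ≤ C*(N:ℝ) := by
        rw [h2y, hlog1y]
        have hMC : M^2/(2*Real.exp 1^2) = C * (X^2/η^2 * 32) := by
          rw [hXrel]; field_simp; ring
        rw [hMC]
        by_cases hterm2sgn : 0 ≤ term2
        · have hq : 32*(2*u - (Real.log 4 + 2)) ≤ 57*u^2 :=
            modest_aux_quad1 u _ (Real.log_nonneg (by norm_num))
          have hmul := mul_le_mul_of_nonneg_left hq (show 0 ≤ X^2/η^2 by positivity)
          have hN1 : 57 * X^2/η^2 * u^2 ≤ (N:ℝ) := by linarith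
          calc C * (X^2/η^2 * 32) * (2*u - (Real.log 4 + 2))
              = C * (X^2/η^2 * (32*(2*u - (Real.log 4 + 2)))) := by ring
            _ ≤ C * (X^2/η^2 * (57*u^2)) := by
                apply mul_le_mul_of_nonneg_left _ hCpos.le
                exact mul_le_mul_of_nonneg_left hq (by positivity)
            _ = C * (57 * X^2/η^2 * u^2) := by ring
            _ ≤ C * (N:ℝ) := by
                apply mul_le_mul_of_nonneg_left hN1 hCpos.le
        · push_neg at hterm2sgn
          -- -term2 ≤ 2/C
          have hw1 : 24 * (S:ℝ) * (A:ℝ) / (δ * η) < 1 := by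
            by_contra h
            push_neg at h
            have h0 : 0 ≤ Real.log (24 * (S:ℝ) * (A:ℝ) / (δ * η)) := Real.log_nonneg h
            have : (0:ℝ) ≤ term2 := by
              rw [hterm2def]
              exact mul_nonneg (by positivity) h0
            linarith
          have hinv : Real.log (1/(24 * (S:ℝ) * (A:ℝ) / (δ * η))) ≤
              1/(24 * (S:ℝ) * (A:ℝ) / (δ * η)) - 1 :=
            Real.log_le_sub_one_of_pos (by positivity)
          have hloginv : Real.log (1/(24 * (S:ℝ) * (A:ℝ) / (δ * η))) =
              - Real.log (24 * (S:ℝ) * (A:ℝ) / (δ * η)) := by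
            rw [one_div, Real.log_inv]
          have hwval : 1/(24 * (S:ℝ) * (A:ℝ) / (δ * η)) = δ*η/(24*(S:ℝ)*(A:ℝ)) := by
            rw [one_div_div]
          have hnegterm2 : -term2 ≤ 2/C := by
            rw [hterm2def, hCdef]
            have h1 : - Real.log (24 * (S:ℝ) * (A:ℝ) / (δ * η)) ≤ δ*η/(24*(S:ℝ)*(A:ℝ)) := by
              rw [← hwval, ← hloginv]; linarith
            have h2 : 24/η * (δ*η/(24*(S:ℝ)*(A:ℝ))) = 2/(2*(S:ℝ)*(A:ℝ)/δ) := by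
              field_simp
            calc -(24 / η * Real.log (24 * (S:ℝ) * (A:ℝ) / (δ * η)))
                = 24/η * (- Real.log (24 * (S:ℝ) * (A:ℝ) / (δ * η))) := by ring
              _ ≤ 24/η * (δ*η/(24*(S:ℝ)*(A:ℝ))) := by
                  apply mul_le_mul_of_nonneg_left h1 (by positivity)
              _ = 2/(2*(S:ℝ)*(A:ℝ)/δ) := h2
          -- X²/η² ≥ e/(16C), so 2/C ≤ 12 X²/η²
          have hXlb : Real.exp 1/(16*C) ≤ X^2/η^2 := by
            rw [hXrel]
            rw [div_le_div_iff₀ (by positivity) (by positivity)]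
            exact modest_aux_cube (Real.exp 1) (M^2) C (Real.exp_pos 1) hCpos hMc
          have h2C : 2/C ≤ 12 * (X^2/η^2) := by
            have he27 : (2.7182818283:ℝ) < Real.exp 1 := Real.exp_one_gt_d9
            have h1 : 2/C ≤ Real.exp 1/(16*C) * 12 := by
              rw [div_le_iff₀ hCpos]
              have : Real.exp 1/(16*C) * 12 * C = Real.exp 1 * 12/16 := by
                field_simp
              rw [this]
              linarith
            linarith [mul_le_mul_of_nonneg_right hXlb (show (0:ℝ) ≤ 12 by norm_num)]
          have hq : 32*(2*u - (Real.log 4 + 2)) + 12 ≤ 57*u^2 :=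
            modest_aux_quad2 u _ (Real.log_nonneg (by norm_num))
          -- assemble: C * (X²/η² * 32) * (...) ≤ C*(term1 + term2) ≤ C*N
          have hkey : X^2/η^2 * 32 * (2*u - (Real.log 4 + 2)) ≤
              57 * X^2/η^2 * u^2 + term2 := by
            have hmul := mul_le_mul_of_nonneg_left hq (show 0 ≤ X^2/η^2 by positivity)
            have e1 : X ^ 2 / η ^ 2 * (32 * (2 * u - (Real.log 4 + 2)) + 12)
                = X^2/η^2 * 32 * (2*u - (Real.log 4 + 2)) + 12 * (X^2/η^2) := by ring
            have e2 : X ^ 2 / η ^ 2 * (57 * u ^ 2) = 57 * X^2/η^2 * u^2 := by ring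
            rw [e1, e2] at hmul
            linarith
          calc C * (X^2/η^2 * 32) * (2*u - (Real.log 4 + 2))
              = C * (X^2/η^2 * 32 * (2*u - (Real.log 4 + 2))) := by ring
            _ ≤ C * (57 * X^2/η^2 * u^2 + term2) := by
                apply mul_le_mul_of_nonneg_left hkey hCpos.le
            _ ≤ C * (N:ℝ) := by
                apply mul_le_mul_of_nonneg_left hbN hCpos.le
      have hkey := inv_log one_pos hy0 hLy hxge
      rw [one_mul] at hkey
      have hMy : M^2 * y = 4*Real.exp 1^2 := by
        rw [hydef]; field_simp
      calc M^2 * t ≤ M^2 * (y*(C*(N:ℝ))) := by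
            apply mul_le_mul_of_nonneg_left hkey (by positivity)
        _ = (M^2*y) * (C*(N:ℝ)) := by ring
        _ = 4*Real.exp 1^2 * (C*(N:ℝ)) := by rw [hMy]
  -- finish
  have hsecond : 6 / (N:ℝ) * t ≤ η/2 := by
    have h1 : 6 / (N:ℝ) * t ≤ 6 / (N:ℝ) * (η/12 * (N:ℝ)) := by
      apply mul_le_mul_of_nonneg_left hstepA (by positivity)
    have h2 : 6 / (N:ℝ) * (η/12 * (N:ℝ)) = η/2 := by
      field_simp; ring
    linarith
  have hfirst : 2 * X * Real.sqrt (t / (N:ℝ)) ≤ η/2 := by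
    have hX2 : X^2 = η^2 * (M^2 / (64*Real.exp 1^2 * C)) := by
      rw [← hXrel]; field_simp
    have h16 : 16*X^2*t ≤ η^2*(N:ℝ) := by
      have h1 : 16*X^2*t = η^2/(4*Real.exp 1^2*C) * (M^2*t) := by
        rw [hX2]; field_simp; ring
      have h2 : η^2/(4*Real.exp 1^2*C) * (M^2*t) ≤
          η^2/(4*Real.exp 1^2*C) * (4*Real.exp 1^2 * (C*(N:ℝ))) := by
        apply mul_le_mul_of_nonneg_left hstepB (by positivity)
      have h3 : η^2/(4*Real.exp 1^2*C) * (4*Real.exp 1^2 * (C*(N:ℝ))) = η^2*(N:ℝ) := by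
        field_simp
      linarith
    have htN : t/(N:ℝ) ≤ (η/(4*X))^2 := by
      rw [div_le_iff₀ hNpos, div_pow]
      rw [div_mul_eq_mul_div, le_div_iff₀ (by positivity)]
      linarith [h16]
    have hsq : Real.sqrt (t/(N:ℝ)) ≤ η/(4*X) := by
      calc Real.sqrt (t/(N:ℝ)) ≤ Real.sqrt ((η/(4*X))^2) := Real.sqrt_le_sqrt htN
        _ = η/(4*X) := Real.sqrt_sq (by positivity)
    calc 2 * X * Real.sqrt (t/(N:ℝ)) ≤ 2 * X * (η/(4*X)) := by
          apply mul_le_mul_of_nonneg_left hsq (by positivity)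
      _ = η/2 := by field_simp; ring
  linarith
end

section
/- Let p be a probability vector on a finite set, i.e., p : ι → ℝ with p_i ≥ 0 for all i and ∑_i p_i = 1, and let Γ ≥ 1 denote the number of indices i with p_i > 0. Then ∑_i √(p_i (1 - p_i)) ≤ √(Γ - 1). -/
open Finset

/-- For a probability vector `p` with support of size `Γ ≥ 1`,
`∑ i, √(pᵢ(1-pᵢ)) ≤ √(Γ - 1)`. -/
theorem sum_sqrt_bernoulli_var_le
    {ι : Type*} [Fintype ι] (p : ι → ℝ)
    (hp : ∀ i, 0 ≤ p i) (hsum : ∑ i, p i = 1)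
    (Γ : ℕ) (hΓ : Γ = (Finset.univ.filter fun i => 0 < p i).card) (hΓ1 : 1 ≤ Γ) :
    ∑ i, Real.sqrt (p i * (1 - p i)) ≤ Real.sqrt ((Γ : ℝ) - 1) := by
  set S := Finset.univ.filter fun i => 0 < p i with hS
  have hzero : ∀ i ∈ (Finset.univ : Finset ι), i ∉ S → p i = 0 := by
    intro i _ hi
    simp only [hS, mem_filter, mem_univ, true_and] at hi
    exact le_antisymm (not_lt.mp hi) (hp i)
  have hle1 : ∀ i, p i ≤ 1 := by
    intro i
    calc p i ≤ ∑ j, p j := Finset.single_le_sum (fun j _ => hp j) (mem_univ i)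
    _ = 1 := hsum
  have hnn : ∀ i, 0 ≤ p i * (1 - p i) := fun i =>
    mul_nonneg (hp i) (by linarith [hle1 i])
  have hsumS : ∑ i ∈ S, p i = 1 := by
    rw [← hsum]
    exact Finset.sum_subset (subset_univ S) (fun i h1 h2 => hzero i h1 h2)
  have hrw : ∑ i, Real.sqrt (p i * (1 - p i)) = ∑ i ∈ S, Real.sqrt (p i * (1 - p i)) := by
    refine (Finset.sum_subset (subset_univ S) (fun i h1 h2 => ?_)).symm
    rw [hzero i h1 h2]; simp
  -- Cauchy-Schwarz on the sqrt sum
  have h1 : (∑ i ∈ S, Real.sqrt (p i * (1 - p i))) ^ 2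
      ≤ (Γ : ℝ) * ∑ i ∈ S, p i * (1 - p i) := by
    have := sq_sum_le_card_mul_sum_sq (s := S) (f := fun i => Real.sqrt (p i * (1 - p i)))
    calc (∑ i ∈ S, Real.sqrt (p i * (1 - p i))) ^ 2
        ≤ (S.card : ℝ) * ∑ i ∈ S, Real.sqrt (p i * (1 - p i)) ^ 2 := by exact_mod_cast this
      _ = (Γ : ℝ) * ∑ i ∈ S, p i * (1 - p i) := by
          rw [hΓ]
          congr 1
          exact Finset.sum_congr rfl fun i _ => Real.sq_sqrt (hnn i)
  -- lower bound on sum of squares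
  have h2 : 1 ≤ (Γ : ℝ) * ∑ i ∈ S, (p i) ^ 2 := by
    have := sq_sum_le_card_mul_sum_sq (s := S) (f := p)
    have h' : (∑ i ∈ S, p i) ^ 2 ≤ (S.card : ℝ) * ∑ i ∈ S, (p i) ^ 2 := by exact_mod_cast this
    rw [hsumS] at h'
    rw [hΓ]
    simpa using h'
  have hexp : ∑ i ∈ S, p i * (1 - p i) = 1 - ∑ i ∈ S, (p i) ^ 2 := by
    have : ∑ i ∈ S, p i * (1 - p i) = ∑ i ∈ S, p i - ∑ i ∈ S, (p i) ^ 2 := by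
      rw [← Finset.sum_sub_distrib]
      exact Finset.sum_congr rfl fun i _ => by ring
    rw [this, hsumS]
  have hΓpos : (0 : ℝ) < Γ := by exact_mod_cast hΓ1
  have h3 : (∑ i ∈ S, Real.sqrt (p i * (1 - p i))) ^ 2 ≤ (Γ : ℝ) - 1 := by
    rw [hexp] at h1
    nlinarith [h1, h2]
  rw [hrw]
  have hnnS : 0 ≤ ∑ i ∈ S, Real.sqrt (p i * (1 - p i)) :=
    Finset.sum_nonneg fun i _ => Real.sqrt_nonneg _
  calc ∑ i ∈ S, Real.sqrt (p i * (1 - p i))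
      = Real.sqrt ((∑ i ∈ S, Real.sqrt (p i * (1 - p i))) ^ 2) := (Real.sqrt_sq hnnS).symm
    _ ≤ Real.sqrt ((Γ : ℝ) - 1) := Real.sqrt_le_sqrt h3
end
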